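/- Let A : ℝ^{n₁×n₂} → ℝ^{n₃} be a linear map that is (ε, 2k)-RIP with ε < 1. Suppose Z ∈ ℝ^{n₁×n₂} satisfies b = A(Z), Z(1,:) = Z(2,:), Z(n₁−1,:) = Z(n₁,:), and 0 < s(Z) ≤ k. Then Z is the unique such matrix: any Z̃ ∈ ℝ^{n₁×n₂} with b = A(Z̃), Z̃(1,:) = Z̃(2,:), Z̃(n₁−1,:) = Z̃(n₁,:), and 0 < s(Z̃) ≤ k must equal Z. -/

import Mathlib

/-!
Put `D = Z' - Z`. Then `A D = 0`, `D` satisfies the boundary conditions and `s(D) ≤ 2k`.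
If `s(D) > 0`, the RIP lower bound `(1 - ε) ‖D‖_F² < ‖A D‖² = 0` is absurd. If `s(D) = 0`,
all rows of `D` are equal, so every `Z + t D` has the same row-difference pattern as `Z` and
the same image `b`; the RIP lower bound then bounds `‖Z + t D‖_F` uniformly in `t`, which
the parallelogram law rules out for `D ≠ 0`.
-/

/-- Row-difference sparsity: the number of indices `i ∈ {0,…,n₁−2}` such that
row `i` of `Z` differs from row `i+1` of `Z`. -/
noncomputable def rowDiffSparsity {n₁ n₂ : ℕ} (Z : Matrix (Fin n₁) (Fin n₂) ℝ) : ℕ :=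
  (Finset.univ.filter fun i : Fin (n₁ - 1) =>
    Z ⟨i.1, by have := i.2; omega⟩ ≠ Z ⟨i.1 + 1, by have := i.2; omega⟩).card

/-- Boundary conditions: the first two rows of `Z` are equal and the
last two rows of `Z` are equal. -/
def boundaryRows {n₁ n₂ : ℕ} (hn : 2 ≤ n₁) (Z : Matrix (Fin n₁) (Fin n₂) ℝ) : Prop :=
  Z ⟨0, by omega⟩ = Z ⟨1, by omega⟩ ∧ Z ⟨n₁ - 2, by omega⟩ = Z ⟨n₁ - 1, by omega⟩

/-- `(ε, k)`-RIP: for every nonzero `Z` satisfying the boundary conditions and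
`0 < s(Z) ≤ k`, we have `| ‖A(Z)‖₂² / ‖Z‖_F² − 1 | < ε`. -/
def IsRIP {n₁ n₂ n₃ : ℕ} (hn : 2 ≤ n₁) (ε : ℝ) (k : ℕ)
    (A : Matrix (Fin n₁) (Fin n₂) ℝ →ₗ[ℝ] (Fin n₃ → ℝ)) : Prop :=
  ∀ Z : Matrix (Fin n₁) (Fin n₂) ℝ, Z ≠ 0 → boundaryRows hn Z →
    0 < rowDiffSparsity Z → rowDiffSparsity Z ≤ k →
    |(∑ j, (A Z j) ^ 2) / (∑ i, ∑ j, (Z i j) ^ 2) - 1| < ε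

section FrobeniusSq

variable {m n : Type*} [Fintype m] [Fintype n]

lemma sum_sum_sq_pos {W : Matrix m n ℝ} (hW : W ≠ 0) : 0 < ∑ i, ∑ j, W i j ^ 2 := by
  obtain ⟨i, j, hij⟩ : ∃ i j, W i j ≠ 0 := by
    by_contra! h
    exact hW (Matrix.ext h)
  refine Finset.sum_pos' (fun i _ => Finset.sum_nonneg fun j _ => sq_nonneg _)
    ⟨i, Finset.mem_univ _, ?_⟩
  exact Finset.sum_pos' (fun j _ => sq_nonneg _) ⟨j, Finset.mem_univ _, by positivity⟩

lemma sum_sum_sq_add_smul_add_sum_sum_sq_sub_smul (Z D : Matrix m n ℝ) (t : ℝ) :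
    ∑ i, ∑ j, (Z + t • D) i j ^ 2 + ∑ i, ∑ j, (Z - t • D) i j ^ 2
      = 2 * ∑ i, ∑ j, Z i j ^ 2 + 2 * t ^ 2 * ∑ i, ∑ j, D i j ^ 2 := by
  simp only [Matrix.add_apply, Matrix.sub_apply, Matrix.smul_apply, smul_eq_mul,
    ← Finset.sum_add_distrib, Finset.mul_sum]
  refine Finset.sum_congr rfl fun i _ => Finset.sum_congr rfl fun j _ => ?_
  ring

lemma exists_le_sum_sum_sq_add_smul (Z : Matrix m n ℝ) {D : Matrix m n ℝ} (hD : D ≠ 0)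
    (c : ℝ) : ∃ t : ℝ, c ≤ ∑ i, ∑ j, (Z + t • D) i j ^ 2 := by
  have hZ : 0 ≤ ∑ i, ∑ j, Z i j ^ 2 :=
    Finset.sum_nonneg fun i _ => Finset.sum_nonneg fun j _ => sq_nonneg _
  have hDpos := sum_sum_sq_pos hD
  set t := √(|c| / ∑ i, ∑ j, D i j ^ 2)
  have ht : t ^ 2 * ∑ i, ∑ j, D i j ^ 2 = |c| := by
    rw [Real.sq_sqrt (by positivity), div_mul_cancel₀ _ hDpos.ne']
  have hsum := sum_sum_sq_add_smul_add_sum_sum_sq_sub_smul Z D t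
  by_contra! h
  have hplus := h t
  have hminus := h (-t)
  rw [neg_smul, ← sub_eq_add_neg] at hminus
  linarith [le_abs_self c]

end FrobeniusSq

lemma rowDiffSparsity_zero {n₁ n₂ : ℕ} :
    rowDiffSparsity (0 : Matrix (Fin n₁) (Fin n₂) ℝ) = 0 :=
  Finset.card_eq_zero.mpr (Finset.filter_eq_empty_iff.mpr fun _ _ h => h rfl)

lemma rowDiffSparsity_sub_le {n₁ n₂ : ℕ} (X Y : Matrix (Fin n₁) (Fin n₂) ℝ) :
    rowDiffSparsity (X - Y) ≤ rowDiffSparsity X + rowDiffSparsity Y := by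
  refine (Finset.card_le_card fun i hi => ?_).trans (Finset.card_union_le _ _)
  simp only [Finset.mem_filter, Finset.mem_union, Finset.mem_univ, true_and] at hi ⊢
  by_contra! h
  exact hi (congrArg₂ (· - ·) h.1 h.2)

lemma rowDiffSparsity_smul_le {n₁ n₂ : ℕ} (t : ℝ) (D : Matrix (Fin n₁) (Fin n₂) ℝ) :
    rowDiffSparsity (t • D) ≤ rowDiffSparsity D := by
  refine Finset.card_le_card fun i hi => ?_
  simp only [Finset.mem_filter, Finset.mem_univ, true_and] at hi ⊢
  exact fun h => hi (congrArg (t • ·) h)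

lemma rowDiffSparsity_add_of_rowDiffSparsity_eq_zero {n₁ n₂ : ℕ}
    (Z : Matrix (Fin n₁) (Fin n₂) ℝ) {D : Matrix (Fin n₁) (Fin n₂) ℝ}
    (hD : rowDiffSparsity D = 0) : rowDiffSparsity (Z + D) = rowDiffSparsity Z := by
  rw [rowDiffSparsity, Finset.card_eq_zero, Finset.filter_eq_empty_iff] at hD
  refine congrArg Finset.card (Finset.filter_congr fun i _ => ?_)
  change Z _ + D _ ≠ Z _ + D _ ↔ _
  rw [not_not.mp (hD (Finset.mem_univ i)), ne_eq, add_left_inj]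

namespace boundaryRows

variable {n₁ n₂ : ℕ} {hn : 2 ≤ n₁} {X Y : Matrix (Fin n₁) (Fin n₂) ℝ}

lemma add (hX : boundaryRows hn X) (hY : boundaryRows hn Y) : boundaryRows hn (X + Y) :=
  ⟨congrArg₂ (· + ·) hX.1 hY.1, congrArg₂ (· + ·) hX.2 hY.2⟩

lemma sub (hX : boundaryRows hn X) (hY : boundaryRows hn Y) : boundaryRows hn (X - Y) :=
  ⟨congrArg₂ (· - ·) hX.1 hY.1, congrArg₂ (· - ·) hX.2 hY.2⟩

lemma smul (hX : boundaryRows hn X) (t : ℝ) : boundaryRows hn (t • X) :=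
  ⟨congrArg (t • ·) hX.1, congrArg (t • ·) hX.2⟩

end boundaryRows

lemma IsRIP.sum_sum_sq_lt_div {n₁ n₂ n₃ k : ℕ} {hn : 2 ≤ n₁} {ε : ℝ}
    {A : Matrix (Fin n₁) (Fin n₂) ℝ →ₗ[ℝ] (Fin n₃ → ℝ)} (hA : IsRIP hn ε k A) (hε : ε < 1)
    {W : Matrix (Fin n₁) (Fin n₂) ℝ} (hW : boundaryRows hn W)
    (hpos : 0 < rowDiffSparsity W) (hk : rowDiffSparsity W ≤ k) :
    ∑ i, ∑ j, W i j ^ 2 < (∑ j, A W j ^ 2) / (1 - ε) := by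
  have hW0 : W ≠ 0 := by
    rintro rfl
    exact hpos.ne' rowDiffSparsity_zero
  have hratio : 1 - ε < (∑ j, A W j ^ 2) / ∑ i, ∑ j, W i j ^ 2 :=
    by linarith [(abs_lt.mp (hA W hW0 hW hpos hk)).1]
  rw [lt_div_iff₀ (sum_sum_sq_pos hW0)] at hratio
  rw [lt_div_iff₀ (sub_pos.mpr hε)]
  linarith

/-- Theorem 1 (Uniqueness): if `A` is `(ε, 2k)`-RIP with `ε < 1` and `Z` is a
feasible point (`b = A(Z)`, boundary rows equal, `0 < s(Z) ≤ k`), then `Z` is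
the unique such matrix. -/
theorem uniqueness {n₁ n₂ n₃ k : ℕ} (hn : 2 ≤ n₁) {ε : ℝ} (hε : ε < 1)
    (A : Matrix (Fin n₁) (Fin n₂) ℝ →ₗ[ℝ] (Fin n₃ → ℝ))
    (hA : IsRIP hn ε (2 * k) A)
    (b : Fin n₃ → ℝ) (Z : Matrix (Fin n₁) (Fin n₂) ℝ)
    (hZb : b = A Z) (hZbd : boundaryRows hn Z)
    (hZpos : 0 < rowDiffSparsity Z) (hZk : rowDiffSparsity Z ≤ k) :
    ∀ Z' : Matrix (Fin n₁) (Fin n₂) ℝ,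
      b = A Z' → boundaryRows hn Z' →
      0 < rowDiffSparsity Z' → rowDiffSparsity Z' ≤ k → Z' = Z := by
  intro Z' hZ'b hZ'bd _ hZ'k
  by_contra hne
  have hD : Z' - Z ≠ 0 := sub_ne_zero.mpr hne
  have hAD : A (Z' - Z) = 0 := by rw [map_sub, ← hZb, ← hZ'b, sub_self]
  rcases (rowDiffSparsity (Z' - Z)).eq_zero_or_pos with hs | hs
  · obtain ⟨t, ht⟩ := exists_le_sum_sum_sq_add_smul Z hD ((∑ j, b j ^ 2) / (1 - ε))
    have hst : rowDiffSparsity (Z + t • (Z' - Z)) = rowDiffSparsity Z :=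
      rowDiffSparsity_add_of_rowDiffSparsity_eq_zero Z
        (Nat.eq_zero_of_le_zero (hs ▸ rowDiffSparsity_smul_le t (Z' - Z)))
    have hlt := hA.sum_sum_sq_lt_div hε (hZbd.add ((hZ'bd.sub hZbd).smul t))
      (hst ▸ hZpos) (by omega)
    rw [map_add, map_smul, hAD, smul_zero, add_zero, ← hZb] at hlt
    linarith
  · have hlt := hA.sum_sum_sq_lt_div hε (hZ'bd.sub hZbd) hs
      (by linarith [rowDiffSparsity_sub_le Z' Z])
    simp only [hAD, Pi.zero_apply, zero_pow two_ne_zero, Finset.sum_const_zero, zero_div] at hlt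
    linarith [sum_sum_sq_pos hD]
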